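/- Expected Groves payment is constant in the agent's future randomness: if p_i(t) is a quadratic function of the random vectors {X(τ,s), U(τ,s) : τ ≥ t} all of which have zero conditional mean given h_{k−1} (for t ≥ k), plus h_{k−1}-measurable terms, and the cross terms pair a zero-conditional-mean factor with an h_{k−1}-measurable factor, then E[p_i(t) | h_{k−1}] equals an h_{k−1}-measurable constant that does not depend on agent i's bid at time k−1, provided the zero-mean factors' conditional second moments do not depend on that bid. -/

import Mathlib

open Finset MeasureTheory

namespace MeasureTheory

variable {Ω : Type*} {m mΩ : MeasurableSpace Ω} {μ : Measure Ω}

theorem condExp_mul_ae_eq_zero_of_stronglyMeasurable_left {f g : Ω → ℝ}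
    (hf : StronglyMeasurable[m] f) (hfg : Integrable (f * g) μ) (hg : Integrable g μ)
    (hg_zero : μ[g | m] =ᵐ[μ] 0) : μ[f * g | m] =ᵐ[μ] 0 := by
  filter_upwards [condExp_mul_of_stronglyMeasurable_left hf hfg hg, hg_zero] with ω hfg hg
  simp [hfg, hg]

theorem condExp_add_sum_mul_ae_eq_condExp {ι : Type*} (s : Finset ι) {q : Ω → ℝ}
    {Y Z : ι → Ω → ℝ} (hq : Integrable q μ) (hY : ∀ i ∈ s, StronglyMeasurable[m] (Y i))
    (hZ : ∀ i ∈ s, Integrable (Z i) μ) (hYZ : ∀ i ∈ s, Integrable (Y i * Z i) μ)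
    (hZ_zero : ∀ i ∈ s, μ[Z i | m] =ᵐ[μ] 0) :
    μ[q + ∑ i ∈ s, Y i * Z i | m] =ᵐ[μ] μ[q | m] := by
  have hcross : μ[∑ i ∈ s, Y i * Z i | m] =ᵐ[μ] 0 := calc
    μ[∑ i ∈ s, Y i * Z i | m] =ᵐ[μ] ∑ i ∈ s, μ[Y i * Z i | m] := condExp_finsetSum hYZ m
    _ =ᵐ[μ] ∑ _i ∈ s, (0 : Ω → ℝ) := eventuallyEq_sum fun i hi =>
      condExp_mul_ae_eq_zero_of_stronglyMeasurable_left (hY i hi) (hYZ i hi) (hZ i hi)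
        (hZ_zero i hi)
    _ = 0 := Finset.sum_const_zero
  calc μ[q + ∑ i ∈ s, Y i * Z i | m]
      =ᵐ[μ] μ[q | m] + μ[∑ i ∈ s, Y i * Z i | m] :=
        condExp_add hq (integrable_finsetSum' s hYZ) m
    _ =ᵐ[μ] μ[q | m] + 0 := hcross.add_left
    _ = μ[q | m] := add_zero _

end MeasureTheory

theorem expected_groves_payment_bid_independent_general
    {Ω : Type*} {mΩ : MeasurableSpace Ω} (μ : Measure Ω)
    (m : MeasurableSpace Ω)                         -- the σ-algebra h_{k−1}
    (L : ℕ)                                         -- number of cross terms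
    (p : ℝ → Ω → ℝ)                                 -- payment as a function of agent i's bid
    (q : Ω → ℝ)                                     -- bid-independent part
    (Y : ℝ → Fin L → Ω → ℝ)                         -- h_{k−1}-measurable cross factors
    (Z : Fin L → Ω → ℝ)                             -- zero-conditional-mean factors
    (hdecomp : ∀ b ω, p b ω = q ω + ∑ l, Y b l ω * Z l ω)
    (hqint : Integrable q μ)
    (hYmeas : ∀ b l, StronglyMeasurable[m] (Y b l))
    (hZint : ∀ l, Integrable (Z l) μ)
    (hprodint : ∀ b l, Integrable (fun ω => Y b l ω * Z l ω) μ)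
    (hZzero : ∀ l, μ[Z l | m] =ᵐ[μ] 0) :
    (∀ b, μ[p b | m] =ᵐ[μ] μ[q | m]) ∧
      ∀ b₁ b₂, μ[p b₁ | m] =ᵐ[μ] μ[p b₂ | m] := by
  have hp : ∀ b, μ[p b | m] =ᵐ[μ] μ[q | m] := fun b => by
    have hp_eq : p b = q + ∑ l, Y b l * Z l := by
      ext ω
      simp [hdecomp]
    rw [hp_eq]
    exact condExp_add_sum_mul_ae_eq_condExp univ hqint (fun l _ => hYmeas b l)
      (fun l _ => hZint l) (fun l _ => hprodint b l) (fun l _ => hZzero l)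
  exact ⟨hp, fun b₁ b₂ => (hp b₁).trans (hp b₂).symm⟩

/-- Expected Groves payment is constant in the agent's bid: if, for every bid `b` of agent `i`
at time `k−1`, the payment decomposes as `p b = q + Σ_l Y_l(b)·Z_l`, where `q` (the purely
quadratic part in the zero-mean future layers plus `h_{k−1}`-measurable terms) does not depend
on `b`, each cross-term factor `Y_l(b)` is `h_{k−1}`-measurable, and each `Z_l` has zero
conditional mean given `h_{k−1}`, then `E[p b | h_{k−1}]` is (a.e.) the same
`h_{k−1}`-measurable function for every bid `b` — namely `E[q | h_{k−1}]`. -/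
theorem expected_groves_payment_bid_independent
    {Ω : Type*} {mΩ : MeasurableSpace Ω} (μ : Measure Ω) [IsFiniteMeasure μ]
    (m : MeasurableSpace Ω) (hm : m ≤ mΩ)          -- the σ-algebra h_{k−1}
    (L : ℕ)                                         -- number of cross terms
    (p : ℝ → Ω → ℝ)                                 -- payment as a function of agent i's bid
    (q : Ω → ℝ)                                     -- bid-independent part
    (Y : ℝ → Fin L → Ω → ℝ)                         -- h_{k−1}-measurable cross factors
    (Z : Fin L → Ω → ℝ)                             -- zero-conditional-mean factors
    (hdecomp : ∀ b ω, p b ω = q ω + ∑ l, Y b l ω * Z l ω)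
    (hqint : Integrable q μ)
    (hYmeas : ∀ b l, StronglyMeasurable[m] (Y b l))
    (hZint : ∀ l, Integrable (Z l) μ)
    (hprodint : ∀ b l, Integrable (fun ω => Y b l ω * Z l ω) μ)
    (hZzero : ∀ l, μ[Z l | m] =ᵐ[μ] 0) :
    (∀ b, μ[p b | m] =ᵐ[μ] μ[q | m]) ∧
      ∀ b₁ b₂, μ[p b₁ | m] =ᵐ[μ] μ[p b₂ | m] :=
  expected_groves_payment_bid_independent_general (mΩ := mΩ) μ m L p q Y Z hdecomp hqint hYmeas
    hZint hprodint hZzero
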